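/- arXiv:2502.03839 — 2 statements merged into one kernel-verified Lean document; each statement's English description precedes it below -/
import Mathlib

section
/- Suppose n = 3m for some even integer m > 1. Then every 2-2-XOR-BN on n nodes has a control node set of size at most (5/6)n. -/
namespace BN

variable {n : ℕ}

/-- The Boolean function `f` depends on input `j`. -/
def Depends (f : (Fin n → Bool) → Bool) (j : Fin n) : Prop :=
  ∃ x : Fin n → Bool, f (Function.update x j (!(x j))) ≠ f x

/-- The set of incoming nodes of node `i` (Γ⁻). -/
def inSet (F : Fin n → (Fin n → Bool) → Bool) (i : Fin n) : Set (Fin n) :=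
  {j | Depends (F i) j}

/-- The set of outgoing nodes of node `i` (Γ⁺). -/
def outSet (F : Fin n → (Fin n → Bool) → Bool) (i : Fin n) : Set (Fin n) :=
  {j | Depends (F j) i}

/-- The controlled trajectory: nodes in `U` get an xor-control signal. -/
def traj (F : Fin n → (Fin n → Bool) → Bool) (U : Finset (Fin n))
    (u : ℕ → Fin n → Bool) (x0 : Fin n → Bool) : ℕ → Fin n → Bool
  | 0 => x0
  | t + 1 => fun i =>
      if i ∈ U then Bool.xor (u t i) (F i (traj F U u x0 t))
      else F i (traj F U u x0 t)

/-- `U` is a control node set: any initial state can be driven to any target state. -/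
def IsControlSet (F : Fin n → (Fin n → Bool) → Bool) (U : Finset (Fin n)) : Prop :=
  ∀ x0 xT : Fin n → Bool, ∃ t : ℕ, 1 ≤ t ∧ ∃ u : ℕ → Fin n → Bool, traj F U u x0 t = xT

/-- XOR (parity) of the inputs in `S`. -/
def xorFun (S : Finset (Fin n)) (x : Fin n → Bool) : Bool :=
  decide ((S.filter (fun j => x j = true)).card % 2 = 1)

/-- `f` is the XOR of `k` distinct inputs, or its negation. -/
def IsKXor (k : ℕ) (f : (Fin n → Bool) → Bool) : Prop :=
  ∃ S : Finset (Fin n), S.card = k ∧ (f = xorFun S ∨ f = fun x => !(xorFun S x))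

/-- A `k`-`k`-XOR-BN: each function is a `k`-input XOR (or negation) and
every node has indegree `k` and outdegree `k`. -/
def IsKKXorBN (k : ℕ) (F : Fin n → (Fin n → Bool) → Bool) : Prop :=
  (∀ i, IsKXor k (F i)) ∧ ∀ i, (inSet F i).ncard = k ∧ (outSet F i).ncard = k

lemma xorFun_pair {a b : Fin n} (hab : a ≠ b) (x : Fin n → Bool) :
    xorFun {a, b} x = Bool.xor (x a) (x b) := by
  unfold xorFun
  cases ha : x a <;> cases hb : x b <;>
    simp [Finset.filter_insert, Finset.filter_singleton, ha, hb,
      Finset.card_insert_of_notMem, hab]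

lemma dep_char (cc : Bool) (a b : Fin n) (hab : a ≠ b)
    (f : (Fin n → Bool) → Bool)
    (hf : ∀ x, f x = Bool.xor cc (Bool.xor (x a) (x b))) (j : Fin n) :
    Depends f j ↔ (a = j ∨ b = j) := by
  constructor
  · rintro ⟨x, hx⟩
    by_contra hc
    push_neg at hc
    apply hx
    rw [hf, hf]
    simp only [Function.update_apply, if_neg hc.1, if_neg hc.2]
  · rintro (h | h)
    · subst h
      refine ⟨fun _ => false, ?_⟩
      rw [hf, hf]
      simp only [Function.update_apply, if_pos rfl, if_neg hab.symm]
      cases cc <;> simp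
    · subst h
      refine ⟨fun _ => false, ?_⟩
      rw [hf, hf]
      simp only [Function.update_apply, if_pos rfl, if_neg hab]
      cases cc <;> simp

lemma greedy_aux (A B : Fin n → Fin n) (hAB : ∀ i, A i ≠ B i)
    (Out : Fin n → Finset (Fin n))
    (hmem : ∀ i j, j ∈ Out i ↔ (A j = i ∨ B j = i))
    (hcard : ∀ i, (Out i).card = 2) :
    ∀ k : ℕ, 6 * k ≤ n → ∃ (W D : Finset (Fin n)) (f : Fin n → Fin n),
      W.card = k ∧ W ⊆ D ∧ D.card ≤ 6 * k ∧
      (∀ w ∈ W, f w = A w ∨ f w = B w) ∧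
      (∀ w ∈ W, f w ∉ W) ∧
      (∀ w ∈ W, ∀ s ∈ Out (f w), s ≠ w → s ∉ W) ∧
      (∀ w ∈ W, f w ∈ D) ∧
      (∀ w ∈ W, ∀ s ∈ Out (f w), s ≠ w → s ∈ D) ∧
      (∀ w ∈ W, Out w ⊆ D) ∧
      (∀ w ∈ W, ∀ c j, w ∈ Out c → j ∈ Out c → j ≠ w → j ∈ D) := by
  intro k
  induction k with
  | zero =>
    intro _
    exact ⟨∅, ∅, fun i => i, by simp, by simp, by simp, by simp, by simp, by simp,
      by simp, by simp, by simp, by simp⟩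
  | succ k ih =>
    intro h6
    obtain ⟨W, D, f, hWcard, hWD, hDcard, hG1, hG2, hG3, hfD, hsD, hOutD, hP2⟩ :=
      ih (by omega)
    have hex : ∃ v : Fin n, v ∉ D := by
      by_contra h
      push_neg at h
      have hsub : (Finset.univ : Finset (Fin n)) ⊆ D := fun v _ => h v
      have := Finset.card_le_card hsub
      simp only [Finset.card_univ, Fintype.card_fin] at this
      omega
    obtain ⟨v, hvD⟩ := hex
    set cv : Fin n := if A v = v then B v else A v with hcv
    have hcvAB : cv = A v ∨ cv = B v := by
      rw [hcv]; split
      · right; rfl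
      · left; rfl
    have hcvne : cv ≠ v := by
      rw [hcv]; split
      · rename_i h
        intro hb
        exact hAB v (by rw [h, hb])
      · rename_i h
        exact h
    have hvOutcv : v ∈ Out cv := (hmem cv v).mpr
      (by rcases hcvAB with h | h
          · left; exact h.symm
          · right; exact h.symm)
    have hvOutA : v ∈ Out (A v) := (hmem _ _).mpr (Or.inl rfl)
    have hvOutB : v ∈ Out (B v) := (hmem _ _).mpr (Or.inr rfl)
    have hvW : v ∉ W := fun h => hvD (hWD h)
    have hinW : ∀ c, v ∈ Out c → c ∉ W := fun c hvc hcW => hvD (hOutD c hcW hvc)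
    have hsibW : ∀ s, s ∈ Out cv → s ≠ v → s ∉ W := by
      intro s hs hsv hsW
      exact hvD (hP2 s hsW cv v hs hvOutcv (Ne.symm hsv))
    set E : Finset (Fin n) := (Out (A v) ∪ Out (B v)).erase v with hE
    set D' : Finset (Fin n) := insert v (insert cv (Out v ∪ E ∪ D)) with hD'
    set W' : Finset (Fin n) := insert v W with hW'
    set f' : Fin n → Fin n := Function.update f v cv with hf'
    have hDD' : D ⊆ D' := by
      intro x hx
      simp only [hD', Finset.mem_insert, Finset.mem_union]
      tauto
    have hED' : E ⊆ D' := by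
      intro x hx
      simp only [hD', Finset.mem_insert, Finset.mem_union]
      tauto
    have hOutvD' : Out v ⊆ D' := by
      intro x hx
      simp only [hD', Finset.mem_insert, Finset.mem_union]
      tauto
    have hf'v : f' v = cv := Function.update_self _ _ _
    have hf'w : ∀ w ∈ W, f' w = f w := by
      intro w hw
      exact Function.update_of_ne (fun h => hvW (by rwa [h] at hw)) _ _
    have hmemW' : ∀ x, x ∈ W' ↔ x = v ∨ x ∈ W := by
      intro x; simp [hW', Finset.mem_insert]
    have hEcard : E.card ≤ 2 := by
      have hsub : E ⊆ (Out (A v)).erase v ∪ (Out (B v)).erase v := by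
        intro x hx
        simp only [hE, Finset.mem_erase, Finset.mem_union] at hx ⊢
        tauto
      have h1 : ((Out (A v)).erase v).card = 1 := by
        rw [Finset.card_erase_of_mem hvOutA, hcard]
      have h2 : ((Out (B v)).erase v).card = 1 := by
        rw [Finset.card_erase_of_mem hvOutB, hcard]
      calc E.card ≤ ((Out (A v)).erase v ∪ (Out (B v)).erase v).card :=
            Finset.card_le_card hsub
        _ ≤ _ := Finset.card_union_le _ _
        _ ≤ 2 := by omega
    refine ⟨W', D', f', ?_, ?_, ?_, ?_, ?_, ?_, ?_, ?_, ?_, ?_⟩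
    · rw [hW', Finset.card_insert_of_notMem hvW, hWcard]
    · intro x hx
      rcases (hmemW' x).mp hx with rfl | hx
      · simp [hD']
      · exact hDD' (hWD hx)
    · have h1 : D'.card ≤ (Out v ∪ E ∪ D).card + 2 := by
        have ha := Finset.card_insert_le cv (Out v ∪ E ∪ D)
        have hb := Finset.card_insert_le v (insert cv (Out v ∪ E ∪ D))
        rw [hD']; omega
      have h2 : (Out v ∪ E ∪ D).card ≤ (Out v).card + E.card + D.card := by
        have ha := Finset.card_union_le (Out v ∪ E) D
        have hb := Finset.card_union_le (Out v) E
        omega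
      have h3 := hcard v
      omega
    · intro w hw
      rcases (hmemW' w).mp hw with rfl | hw
      · rw [hf'v]; exact hcvAB
      · rw [hf'w w hw]; exact hG1 w hw
    · intro w hw
      rcases (hmemW' w).mp hw with rfl | hw
      · rw [hf'v]
        intro hc
        rcases (hmemW' cv).mp hc with h | h
        · exact hcvne h
        · exact hinW cv hvOutcv h
      · rw [hf'w w hw]
        intro hc
        rcases (hmemW' (f w)).mp hc with h | h
        · exact hvD (h ▸ hfD w hw)
        · exact hG2 w hw h
    · intro w hw s hs hsw
      rcases (hmemW' w).mp hw with rfl | hw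
      · rw [hf'v] at hs
        intro hc
        rcases (hmemW' s).mp hc with h | h
        · exact hsw h
        · exact hsibW s hs hsw h
      · rw [hf'w w hw] at hs
        intro hc
        rcases (hmemW' s).mp hc with h | h
        · exact hvD (h ▸ hsD w hw s hs hsw)
        · exact hG3 w hw s hs hsw h
    · intro w hw
      rcases (hmemW' w).mp hw with rfl | hw
      · rw [hf'v]
        simp [hD']
      · rw [hf'w w hw]
        exact hDD' (hfD w hw)
    · intro w hw s hs hsw
      rcases (hmemW' w).mp hw with rfl | hw
      · rw [hf'v] at hs
        apply hED'
        simp only [hE, Finset.mem_erase, Finset.mem_union]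
        refine ⟨hsw, ?_⟩
        rcases hcvAB with h | h
        · left; rw [← h]; exact hs
        · right; rw [← h]; exact hs
      · rw [hf'w w hw] at hs
        exact hDD' (hsD w hw s hs hsw)
    · intro w hw
      rcases (hmemW' w).mp hw with rfl | hw
      · exact hOutvD'
      · exact fun x hx => hDD' (hOutD w hw hx)
    · intro w hw c j hwc hjc hjw
      rcases (hmemW' w).mp hw with rfl | hw
      · have hc : A w = c ∨ B w = c := (hmem c w).mp hwc
        apply hED'
        simp only [hE, Finset.mem_erase, Finset.mem_union]
        refine ⟨hjw, ?_⟩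
        rcases hc with h | h
        · left; rw [h]; exact hjc
        · right; rw [h]; exact hjc
      · exact hDD' (hP2 w hw c j hwc hjc hjw)

lemma control_aux (F : Fin n → (Fin n → Bool) → Bool)
    (A B : Fin n → Fin n) (C : Fin n → Bool)
    (hAB : ∀ i, A i ≠ B i)
    (hFx : ∀ i x, F i x = Bool.xor (C i) (Bool.xor (x (A i)) (x (B i))))
    (W : Finset (Fin n)) (f : Fin n → Fin n)
    (hG1 : ∀ w ∈ W, f w = A w ∨ f w = B w)
    (hG2 : ∀ w ∈ W, f w ∉ W)
    (hG3 : ∀ w ∈ W, ∀ s, (A s = f w ∨ B s = f w) → s ≠ w → s ∉ W) :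
    IsControlSet F Wᶜ := by
  classical
  intro x0 xT
  refine ⟨2, by norm_num, ?_⟩
  set ob : Fin n → Fin n := fun w => if f w = A w then B w else A w with hob
  have hfne : ∀ w ∈ W, f w ≠ ob w := by
    intro w hw
    simp only [hob]
    split
    · rename_i h; rw [h]; exact hAB w
    · rename_i h
      rcases hG1 w hw with h' | h'
      · exact absurd h' h
      · rw [h']; exact (hAB w).symm
  have hswap : ∀ w ∈ W, ∀ x : Fin n → Bool,
      Bool.xor (x (A w)) (x (B w)) = Bool.xor (x (f w)) (x (ob w)) := by
    intro w hw x
    simp only [hob]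
    split
    · rename_i h; rw [h]
    · rename_i h
      rcases hG1 w hw with h' | h'
      · exact absurd h' h
      · rw [h']; exact Bool.xor_comm _ _
  have hobAB : ∀ w ∈ W, A w = ob w ∨ B w = ob w := by
    intro w hw
    simp only [hob]
    split
    · right; rfl
    · left; rfl
  have hfAB : ∀ w ∈ W, A w = f w ∨ B w = f w := by
    intro w hw
    rcases hG1 w hw with h | h
    · left; exact h.symm
    · right; exact h.symm
  have huniq : ∀ w ∈ W, ∀ w' ∈ W, f w = f w' → w = w' := by
    intro w hw w' hw' he
    by_contra hne
    have : A w = f w' ∨ B w = f w' := by rw [← he]; exact hfAB w hw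
    exact hG3 w' hw' w this hne hw
  have hobne : ∀ w ∈ W, ¬ ∃ w', w' ∈ W ∧ f w' = ob w := by
    rintro w hw ⟨w', hw', hfw'⟩
    have h1 : A w = f w' ∨ B w = f w' := by rw [hfw']; exact hobAB w hw
    by_cases hne : w = w'
    · subst hne; exact hfne w hw hfw'
    · exact hG3 w' hw' w h1 hne hw
  set y : Fin n → Bool := fun i => if i ∈ W then F i x0 else false with hy
  set x1 : Fin n → Bool := fun i =>
    if h : ∃ w, w ∈ W ∧ f w = i then
      Bool.xor (xT h.choose) (Bool.xor (C h.choose) (y (ob h.choose)))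
    else y i with hx1
  set u : ℕ → Fin n → Bool := fun t i =>
    if t = 0 then Bool.xor (x1 i) (F i x0) else Bool.xor (xT i) (F i x1) with hu
  have hx1W : ∀ i ∈ W, x1 i = F i x0 := by
    intro i hi
    have hno : ¬ ∃ w, w ∈ W ∧ f w = i := by
      rintro ⟨w, hw, hfw⟩
      exact hG2 w hw (hfw ▸ hi)
    simp only [hx1, dif_neg hno, hy, if_pos hi]
  have hx1f : ∀ w ∈ W, x1 (f w) = Bool.xor (xT w) (Bool.xor (C w) (y (ob w))) := by
    intro w hw
    have h : ∃ w', w' ∈ W ∧ f w' = f w := ⟨w, hw, rfl⟩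
    have hs := h.choose_spec
    have he : h.choose = w := huniq _ hs.1 w hw hs.2
    simp only [hx1, dif_pos h, he]
  have hx1ob : ∀ w ∈ W, x1 (ob w) = y (ob w) := by
    intro w hw
    simp only [hx1, dif_neg (hobne w hw)]
  have htraj1 : traj F Wᶜ u x0 1 = x1 := by
    funext i
    show (if i ∈ Wᶜ then Bool.xor (u 0 i) (F i x0) else F i x0) = x1 i
    by_cases hi : i ∈ W
    · rw [if_neg (by simp [hi]), hx1W i hi]
    · rw [if_pos (by simp [hi])]
      simp only [hu, if_pos rfl]
      cases x1 i <;> cases F i x0 <;> rfl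
  refine ⟨u, ?_⟩
  funext i
  show (if i ∈ Wᶜ then Bool.xor (u 1 i) (F i (traj F Wᶜ u x0 1))
      else F i (traj F Wᶜ u x0 1)) = xT i
  rw [htraj1]
  by_cases hi : i ∈ W
  · rw [if_neg (by simp [hi])]
    rw [hFx, hswap i hi, hx1f i hi, hx1ob i hi]
    cases xT i <;> cases C i <;> cases y (ob i) <;> rfl
  · rw [if_pos (by simp [hi])]
    simp only [hu, if_neg (by norm_num : (1:ℕ) ≠ 0)]
    cases xT i <;> cases F i x1 <;> rfl


/-- If `n = 3m` with `m > 1` even, then every 2-2-XOR-BN on `n` nodes has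
a control node set of size at most `(5/6)·n`. -/
theorem stmt3 (m n : ℕ) (hm : 1 < m) (hme : Even m) (hn : n = 3 * m)
    (F : Fin n → (Fin n → Bool) → Bool) (hF : IsKKXorBN 2 F) :
    ∃ U : Finset (Fin n), IsControlSet F U ∧ (U.card : ℚ) ≤ (5 / 6 : ℚ) * n := by
  classical
  obtain ⟨hK, hdeg⟩ := hF
  have hdata : ∀ i, ∃ a b : Fin n, ∃ cc : Bool, a ≠ b ∧
      ∀ x, F i x = Bool.xor cc (Bool.xor (x a) (x b)) := by
    intro i
    obtain ⟨S, hS2, hforms⟩ := hK i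
    obtain ⟨a, b, hab, rfl⟩ := Finset.card_eq_two.mp hS2
    rcases hforms with h | h
    · exact ⟨a, b, false, hab, fun x => by rw [h, xorFun_pair hab]; simp⟩
    · refine ⟨a, b, true, hab, fun x => ?_⟩
      rw [h]
      simp only [xorFun_pair hab]
      cases x a <;> cases x b <;> rfl
  choose A B C hAB hFx using hdata
  have hdep : ∀ i j, Depends (F i) j ↔ (A i = j ∨ B i = j) := by
    intro i j
    exact dep_char (C i) (A i) (B i) (hAB i) (F i) (hFx i) j
  set Out : Fin n → Finset (Fin n) :=
    fun i => Finset.univ.filter (fun j => A j = i ∨ B j = i) with hOutdef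
  have hmemOut : ∀ i j, j ∈ Out i ↔ (A j = i ∨ B j = i) := by
    intro i j; simp [hOutdef]
  have hOutCard : ∀ i, (Out i).card = 2 := by
    intro i
    have h2 := (hdeg i).2
    have he : outSet F i = ↑(Out i) := by
      ext j
      simp only [outSet, Set.mem_setOf_eq, Finset.coe_filter, hOutdef,
        Finset.mem_univ, true_and]
      exact hdep j i
    rw [he, Set.ncard_coe_finset] at h2
    exact h2
  obtain ⟨r, hr⟩ := hme
  have h6r : 6 * r ≤ n := by omega
  obtain ⟨W, D, f, hWcard, hWD, hDcard, hG1, hG2, hG3, hfD, hsD, hOutD, hP2⟩ :=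
    greedy_aux A B hAB Out hmemOut hOutCard r h6r
  refine ⟨Wᶜ, ?_, ?_⟩
  · exact control_aux F A B C hAB hFx W f hG1 hG2
      (fun w hw s hs hsw => hG3 w hw s ((hmemOut (f w) s).mpr hs) hsw)
  · have hc : Wᶜ.card = n - r := by
      rw [Finset.card_compl, hWcard, Fintype.card_fin]
    rw [hc]
    have h1 : n - r = 5 * r := by omega
    rw [h1]
    have h2 : (n : ℚ) = 6 * r := by
      have : n = 6 * r := by omega
      rw [this]; push_cast; ring
    rw [h2]
    push_cast
    ring_nf
    linarith [le_refl ((r:ℚ) * 5)]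

end BN
end

section
/- For every integer n = 3m+1 with m > 1, there exists a simple 2-2-AND-BN on n nodes for which the size of the minimum control node set is m + 1 = (n−1)/3 + 1. -/
/-
Take `f_i = x_{i-1} ∧ x_{i-2}` on the cycle `ℤ/(3m+1)`.

Lower bound: if `i`, `i+1`, `i+2` are all uncontrolled, a state with `x_i = x_{i+2} = 1` can only
follow a state with `x_{i-2} = x_{i-1} = x_i = 1`, hence has `x_{i+1} = 1`; so no control set
misses three consecutive nodes, and covering the `3m+1` windows `{i, i+1, i+2}` needs `m+1` nodes.

Upper bound: the uncontrolled nodes form a chain `3m → 1 → 2 → 4 → 5 → ⋯ → 3m-1`, every link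
gated by a controlled node `3j`. Holding the controls at `1` floods the network with `1`s within
`2m+1` steps, and from the all-ones state any target is reached by feeding it in along the chain.
-/

namespace BN

variable {n : ℕ}

/-- AND of the inputs in `S` (no negations). -/
def andFun (S : Finset (Fin n)) (x : Fin n → Bool) : Bool :=
  decide (∀ j ∈ S, x j = true)

/-- `f` is the conjunction of `k` distinct inputs (no negations). -/
def IsSimpleKAnd (k : ℕ) (f : (Fin n → Bool) → Bool) : Prop :=
  ∃ S : Finset (Fin n), S.card = k ∧ f = andFun S

/-- A simple `k`-`k`-AND-BN: each function is a `k`-input AND (no negations) and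
every node has indegree `k` and outdegree `k`. -/
def IsSimpleKKAndBN (k : ℕ) (F : Fin n → (Fin n → Bool) → Bool) : Prop :=
  (∀ i, IsSimpleKAnd k (F i)) ∧ ∀ i, (inSet F i).ncard = k ∧ (outSet F i).ncard = k

end BN

namespace Fin
open Fin.CommRing
variable {n : ℕ}

lemma val_sub_one_eq_ite (a : Fin (n + 1)) : (a - 1).val = if a.val = 0 then n else a.val - 1 := by
  simp only [coe_sub_one, Fin.ext_iff, val_zero]

lemma val_sub_two_eq_ite (a : Fin (n + 1)) :
    (a - 2).val = if a.val = 0 then n - 1 else if a.val = 1 then n else a.val - 2 := by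
  rw [show a - 2 = a - 1 - 1 by ring, val_sub_one_eq_ite, val_sub_one_eq_ite]
  split_ifs <;> omega

lemma val_add_one_eq_ite (a : Fin (n + 1)) : (a + 1).val = if a.val = n then 0 else a.val + 1 := by
  simp only [val_add_one, Fin.ext_iff, val_last]

lemma val_add_two_eq_ite (hn : 1 ≤ n) (a : Fin (n + 1)) :
    (a + 2).val = if a.val = n then 1 else if a.val + 1 = n then 0 else a.val + 2 := by
  rw [show a + 2 = a + 1 + 1 by ring, val_add_one_eq_ite, val_add_one_eq_ite]
  split_ifs <;> omega

end Fin

lemma Finset.exists_forall_add_notMem_of_card_mul_lt {G : Type*} [AddGroup G] [Fintype G]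
    [DecidableEq G] (U D : Finset G) (h : U.card * D.card < Fintype.card G) :
    ∃ i, ∀ d ∈ D, i + d ∉ U := by
  by_contra! hcover
  refine h.not_ge (le_trans ?_ Finset.card_sub_le)
  rw [← Finset.card_univ]
  refine Finset.card_le_card fun i _ => ?_
  obtain ⟨d, hd, hiU⟩ := hcover i
  simpa using Finset.sub_mem_sub hiU hd

lemma Relation.reflTransGen_iterate {α : Type*} {r : α → α → Prop} {f : α → α}
    (hf : ∀ x, r x (f x)) (x : α) (k : ℕ) : Relation.ReflTransGen r x (f^[k] x) := by
  induction k with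
  | zero => exact .refl
  | succ k ih => exact ih.tail (by rw [Function.iterate_succ_apply']; exact hf _)

namespace BN

section Control

variable {n : ℕ}

@[simp]
lemma andFun_pair (a b : Fin n) (x : Fin n → Bool) : andFun {a, b} x = (x a && x b) := by
  simp [andFun]

lemma depends_andFun_iff {S : Finset (Fin n)} {j : Fin n} : Depends (andFun S) j ↔ j ∈ S := by
  constructor
  · rintro ⟨x, hx⟩
    by_contra hj
    refine hx (decide_eq_decide.mpr (forall₂_congr fun l hl => ?_))
    rw [Function.update_of_ne (ne_of_mem_of_not_mem hl hj)]
  · intro hj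
    refine ⟨fun _ => true, ?_⟩
    simp only [andFun]
    simpa using ⟨j, hj, by simp⟩

def Step (F : Fin n → (Fin n → Bool) → Bool) (U : Finset (Fin n)) (x y : Fin n → Bool) : Prop :=
  ∀ i ∉ U, F i x = y i

variable {F : Fin n → (Fin n → Bool) → Bool} {U : Finset (Fin n)}

lemma step_traj (u : ℕ → Fin n → Bool) (x : Fin n → Bool) (t : ℕ) :
    Step F U (traj F U u x t) (traj F U u x (t + 1)) := by
  intro i hi
  simp [traj, hi]

lemma traj_congr {u v : ℕ → Fin n → Bool} {t : ℕ} (h : ∀ s < t, u s = v s) (x : Fin n → Bool) :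
    traj F U u x t = traj F U v x t := by
  induction t with
  | zero => rfl
  | succ t ih =>
    simp only [traj, ih fun s hs => h s (by omega), h t (by omega)]

lemma exists_traj_eq_of_transGen {x y : Fin n → Bool}
    (h : Relation.TransGen (Step F U) x y) : ∃ t, 1 ≤ t ∧ ∃ u, traj F U u x t = y := by
  induction h with
  | @single y hxy =>
    refine ⟨1, le_rfl, fun _ i => y i ^^ F i x, funext fun i => ?_⟩
    by_cases hi : i ∈ U <;> simp [traj, hi, hxy i]
  | @tail y z _ hyz ih =>
    obtain ⟨t, ht, u, hu⟩ := ih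
    refine ⟨t + 1, by omega, Function.update u t fun i => z i ^^ F i y, funext fun i => ?_⟩
    have hprefix : traj F U (Function.update u t fun i => z i ^^ F i y) x t = y := by
      rw [← hu]
      exact traj_congr (fun s hs => Function.update_of_ne hs.ne _ _) x
    by_cases hi : i ∈ U <;> simp [traj, hprefix, hi, hyz i]

lemma isControlSet_iff_transGen :
    IsControlSet F U ↔ ∀ x y, Relation.TransGen (Step F U) x y := by
  refine ⟨fun hU x y => ?_, fun h x y => exists_traj_eq_of_transGen (h x y)⟩
  obtain ⟨t, ht, u, rfl⟩ := hU x y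
  induction t, ht using Nat.le_induction with
  | base => exact .single (step_traj u x 0)
  | succ t _ ih => exact ih.tail (step_traj u x t)

lemma not_isControlSet_of_andFun_subset {a b c : Fin n} (ha : a ∉ U) (hb : b ∉ U) (hc : c ∉ U)
    (hab : a ≠ b) (hcb : c ≠ b) {Sa Sb Sc : Finset (Fin n)} (hFa : F a = andFun Sa)
    (hFb : F b = andFun Sb) (hFc : F c = andFun Sc) (hS : Sb ⊆ Sa ∪ Sc) :
    ¬ IsControlSet F U := by
  intro hU
  obtain ⟨w, -, hw⟩ := Relation.TransGen.tail'_iff.mp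
    (isControlSet_iff_transGen.mp hU (fun _ => true) (fun j => decide (j ≠ b)))
  have hwa := hw a ha
  have hwb := hw b hb
  have hwc := hw c hc
  simp only [hFa, hFb, hFc, andFun, hab, hcb, ne_eq, not_true, not_false_eq_true,
    decide_eq_decide, iff_true, iff_false] at hwa hwb hwc
  exact hwb fun j hj => (Finset.mem_union.mp (hS hj)).elim (hwa j) (hwc j)

end Control

open Fin.CommRing

section Cycle

variable {n : ℕ}

def cycleAnd (n : ℕ) : Fin (n + 1) → (Fin (n + 1) → Bool) → Bool :=
  fun i => andFun {i - 1, i - 2}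

@[simp]
lemma cycleAnd_apply (i : Fin (n + 1)) (x : Fin (n + 1) → Bool) :
    cycleAnd n i x = (x (i - 1) && x (i - 2)) :=
  andFun_pair _ _ _

lemma inSet_cycleAnd (i : Fin (n + 1)) : inSet (cycleAnd n) i = {i - 1, i - 2} := by
  ext j
  simp [inSet, cycleAnd, depends_andFun_iff]

lemma outSet_cycleAnd (i : Fin (n + 1)) : outSet (cycleAnd n) i = {i + 1, i + 2} := by
  ext j
  simp only [outSet, cycleAnd, depends_andFun_iff, Set.mem_ofPred_eq, Finset.mem_insert,
    Finset.mem_singleton, Set.mem_insert_iff, Set.mem_singleton_iff]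
  constructor <;> rintro (h | h) <;> [left; right; left; right] <;> rw [h] <;> ring

lemma one_ne_two_of_two_le (hn : 2 ≤ n) : (1 : Fin (n + 1)) ≠ 2 := by
  simp [Fin.ext_iff, Nat.mod_eq_of_lt, show 1 < n + 1 by omega, show 2 < n + 1 by omega]

lemma isSimpleKKAndBN_cycleAnd (hn : 2 ≤ n) : IsSimpleKKAndBN 2 (cycleAnd n) := by
  have hsub (i : Fin (n + 1)) : i - 1 ≠ i - 2 := by simpa using one_ne_two_of_two_le hn
  have hadd (i : Fin (n + 1)) : i + 1 ≠ i + 2 := by simpa using one_ne_two_of_two_le hn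
  refine ⟨fun i => ⟨{i - 1, i - 2}, Finset.card_pair (hsub i), rfl⟩, fun i => ?_⟩
  rw [inSet_cycleAnd, outSet_cycleAnd]
  exact ⟨Set.ncard_pair (hsub i), Set.ncard_pair (hadd i)⟩

lemma le_three_mul_card_of_isControlSet (hn : 1 ≤ n) {U : Finset (Fin (n + 1))}
    (hU : IsControlSet (cycleAnd n) U) : n + 1 ≤ 3 * U.card := by
  by_contra! hlt
  obtain ⟨i, hi⟩ := Finset.exists_forall_add_notMem_of_card_mul_lt U {0, 1, 2}
    (calc U.card * ({0, 1, 2} : Finset (Fin (n + 1))).card ≤ U.card * 3 :=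
          Nat.mul_le_mul_left _ Finset.card_le_three
      _ < Fintype.card (Fin (n + 1)) := by rw [Fintype.card_fin]; omega)
  have hne (k : Fin (n + 1)) : k + 1 ≠ k := by
    simp [Fin.ext_iff, Nat.mod_eq_of_lt, show 1 < n + 1 by omega]
  refine not_isControlSet_of_andFun_subset (a := i) (b := i + 1) (c := i + 2)
    (by simpa using hi 0) (hi 1 (by simp)) (hi 2 (by simp)) (hne i).symm
    (by rw [show i + 2 = i + 1 + 1 by ring]; exact hne _) rfl rfl rfl ?_ hU
  intro j
  simp only [Finset.mem_insert, Finset.mem_singleton, Finset.mem_union]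
  rintro (rfl | rfl)
  · right; right; ring
  · left; left; ring

end Cycle

section EveryThird

variable {m : ℕ}

def everyThird (m : ℕ) : Finset (Fin (3 * m + 1)) :=
  Finset.univ.filter fun i => i.val % 3 = 0

@[simp]
lemma mem_everyThird {i : Fin (3 * m + 1)} : i ∈ everyThird m ↔ i.val % 3 = 0 := by
  simp [everyThird]

lemma card_everyThird : (everyThird m).card = m + 1 := by
  rw [← Finset.card_range (m + 1)]
  refine Finset.card_nbij' (fun i => i.val / 3) (fun j => Fin.ofNat _ (3 * j)) ?_ ?_ ?_ ?_ <;>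
    intro i hi <;>
    simp only [everyThird, Finset.coe_filter, Finset.coe_range, Finset.mem_univ, true_and,
      Set.mem_ofPred_eq, Set.mem_Iio, Fin.ext_iff, Fin.val_ofNat] at hi ⊢
  · omega
  · rw [Nat.mod_eq_of_lt (show 3 * i < 3 * m + 1 by omega)]; omega
  · rw [Nat.mod_eq_of_lt (show 3 * (i.val / 3) < 3 * m + 1 by omega)]; omega
  · rw [Nat.mod_eq_of_lt (show 3 * i < 3 * m + 1 by omega)]; omega

def saturate (m : ℕ) (x : Fin (3 * m + 1) → Bool) : Fin (3 * m + 1) → Bool :=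
  fun i => if i ∈ everyThird m then true else cycleAnd (3 * m) i x

lemma step_saturate (x : Fin (3 * m + 1) → Bool) :
    Step (cycleAnd (3 * m)) (everyThird m) x (saturate m x) :=
  fun i hi => by simp [saturate, hi]

-- `2 * i / 3` is the position of an uncontrolled node `i` along the chain `1 → 2 → 4 → ⋯`.
lemma saturate_iterate_apply (x : Fin (3 * m + 1) → Bool) (k : ℕ) (i : Fin (3 * m + 1))
    (hik : i.val % 3 = 0 ∧ 1 ≤ k ∨ 2 * i.val / 3 + 2 ≤ k) : (saturate m)^[k] x i = true := by
  induction k generalizing i with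
  | zero => omega
  | succ k ih =>
    have hi := i.isLt
    rw [Function.iterate_succ_apply']
    by_cases hc : i.val % 3 = 0
    · simp [saturate, hc]
    simp only [saturate, mem_everyThird, hc, if_false, cycleAnd_apply, Bool.and_eq_true]
    refine ⟨ih _ ?_, ih _ ?_⟩
    all_goals
      simp only [Fin.val_sub_one_eq_ite, Fin.val_sub_two_eq_ite]
      rcases (by omega : i.val % 3 = 1 ∨ i.val % 3 = 2) with h3 | h3 <;> split_ifs <;> omega

lemma saturate_iterate_eq_true (x : Fin (3 * m + 1) → Bool) :
    (saturate m)^[2 * m + 1] x = fun _ => true :=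
  funext fun i => saturate_iterate_apply x _ i (by
    have := i.isLt
    rcases (by omega : i.val % 3 = 0 ∨ i.val % 3 = 1 ∨ i.val % 3 = 2) with h3 | h3 | h3 <;> omega)

-- A one-step predecessor of `z`: each uncontrolled node takes the value of its successor in
-- the chain (the last one, `3m - 1`, takes `1`), `3m` takes that of `1`, and all gates are open.
def backShift (m : ℕ) (z : Fin (3 * m + 1) → Bool) : Fin (3 * m + 1) → Bool := fun i =>
  if i.val % 3 = 1 then z (i + 1)
  else if i.val = 3 * m ∨ (i.val % 3 = 2 ∧ i.val + 1 ≠ 3 * m) then z (i + 2)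
  else true

lemma step_backShift (z : Fin (3 * m + 1) → Bool) :
    Step (cycleAnd (3 * m)) (everyThird m) (backShift m z) z := by
  intro i hi
  have := i.isLt
  rw [mem_everyThird] at hi
  simp only [cycleAnd_apply, backShift, Fin.val_sub_one_eq_ite, Fin.val_sub_two_eq_ite]
  rcases (by omega : i.val % 3 = 1 ∨ i.val % 3 = 2) with h3 | h3 <;>
    split_ifs <;> first | omega | simp

lemma backShift_iterate_apply (z : Fin (3 * m + 1) → Bool) (k : ℕ)
    (i : Fin (3 * m + 1)) (hi : i.val % 3 ≠ 0) (hik : 2 * m ≤ 2 * i.val / 3 + k) :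
    (backShift m)^[k] z i = true := by
  have := i.isLt
  induction k generalizing i with
  | zero => rcases (by omega : i.val % 3 = 1 ∨ i.val % 3 = 2) with h3 | h3 <;> omega
  | succ k ih =>
    rw [Function.iterate_succ_apply']
    simp only [backShift]
    split_ifs
    · exact ih _ (by rw [Fin.val_add_one_eq_ite]; split_ifs <;> omega)
        (by rw [Fin.val_add_one_eq_ite]; split_ifs <;> omega) (Fin.isLt _)
    · exact ih _ (by rw [Fin.val_add_two_eq_ite (by omega)]; split_ifs <;> omega)
        (by rw [Fin.val_add_two_eq_ite (by omega)]; split_ifs <;> omega) (Fin.isLt _)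
    · rfl

lemma isControlSet_everyThird : IsControlSet (cycleAnd (3 * m)) (everyThird m) := by
  refine isControlSet_iff_transGen.mpr fun x y => ?_
  have hsat : Relation.ReflTransGen (Step (cycleAnd (3 * m)) (everyThird m)) x fun _ => true :=
    saturate_iterate_eq_true x ▸ Relation.reflTransGen_iterate step_saturate x _
  have hfill : Step (cycleAnd (3 * m)) (everyThird m) (fun _ => true) ((backShift m)^[2 * m] y) :=
    fun i hi => by
      rw [mem_everyThird] at hi
      simpa using (backShift_iterate_apply y (2 * m) i hi (by omega)).symm
  have hback : Relation.ReflTransGen (Step (cycleAnd (3 * m)) (everyThird m))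
      ((backShift m)^[2 * m] y) y :=
    Relation.reflTransGen_swap.mp
      (Relation.reflTransGen_iterate (r := Function.swap _) step_backShift y _)
  exact .trans_right hsat (.head' hfill hback)

end EveryThird

/-- For every `n = 3m + 1` with `m > 1`, there exists a simple 2-2-AND-BN
on `n` nodes whose minimum control node set has size `m + 1`. -/
theorem stmt11 (m : ℕ) (hm : 1 < m) :
    ∃ F : Fin (3 * m + 1) → (Fin (3 * m + 1) → Bool) → Bool, IsSimpleKKAndBN 2 F ∧
      (∃ U : Finset (Fin (3 * m + 1)), IsControlSet F U ∧ U.card = m + 1) ∧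
      ∀ U : Finset (Fin (3 * m + 1)), IsControlSet F U → m + 1 ≤ U.card := by
  refine ⟨cycleAnd (3 * m), isSimpleKKAndBN_cycleAnd (by omega),
    ⟨everyThird m, isControlSet_everyThird, card_everyThird⟩, fun U hU => ?_⟩
  have := le_three_mul_card_of_isControlSet (by omega) hU
  omega

end BN
end
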